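/- If G is a finite simple graph each of whose connected components H satisfies α(H) = 2, then the independence polynomial I(G;x) has only real roots, and hence its coefficient sequence is log-concave and unimodal. -/

import Mathlib

open Polynomial Classical in
/-- The set of stable (independent) sets of a graph, as finsets. -/
noncomputable def stableSets {V : Type*} [Fintype V] (G : SimpleGraph V) : Finset (Finset V) :=
  Finset.univ.filter (fun s : Finset V => ∀ v ∈ s, ∀ w ∈ s, ¬ G.Adj v w)

open Polynomial in
/-- The independence polynomial of a finite simple graph. -/
noncomputable def indepPoly {V : Type*} [Fintype V] (G : SimpleGraph V) : Polynomial ℤ :=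
  ∑ s ∈ stableSets G, X ^ s.card

/-- The independence number: the maximum size of a stable set. -/
noncomputable def indepNum {V : Type*} [Fintype V] (G : SimpleGraph V) : ℕ :=
  (stableSets G).sup Finset.card

open Classical in
/-- `sCount G k` is the number of stable sets of cardinality `k` in `G`. -/
noncomputable def sCount {V : Type*} [Fintype V] (G : SimpleGraph V) (k : ℕ) : ℕ :=
  ((stableSets G).filter (fun s => s.card = k)).card

/-- A polynomial is unimodal if its coefficient sequence increases up to some mode `k`
and decreases afterwards. -/
def PolyUnimodal (p : Polynomial ℤ) : Prop :=
  ∃ k, (∀ i j, i ≤ j → j ≤ k → p.coeff i ≤ p.coeff j) ∧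
    (∀ i j, k ≤ i → i ≤ j → p.coeff j ≤ p.coeff i)

/-- A polynomial is log-concave if `a_{i-1} * a_{i+1} ≤ a_i ^ 2` for all `i ≥ 1`. -/
def PolyLogConcave (p : Polynomial ℤ) : Prop :=
  ∀ i, 1 ≤ i → p.coeff (i - 1) * p.coeff (i + 1) ≤ p.coeff i ^ 2

/-!
A component `H` with `α(H) = 2` has `I(H; x) = 1 + n x + m x²`, where `m` counts the non-edges
of `H`. The complement of `H` is triangle-free, so Mantel's theorem gives `4 m ≤ n²` and
`I(H; x) = (1 + r x)(1 + s x)` with `r, s ≥ 0`. Hence `I(G; x)`, the product of these, is a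
product of factors `1 + r x` with `r ≥ 0`. Its roots `-1/r` are real, and multiplication by such a
factor preserves nonnegativity, the absence of internal zeros and log-concavity of the
coefficients; the three together give unimodality.
-/

open Polynomial

/-- Without the absence of internal zeros, log-concavity would not survive multiplication. -/
structure HasLogConcaveCoeffs (p : ℝ[X]) : Prop where
  nonneg : ∀ i, 0 ≤ p.coeff i
  pos_of_succ_pos : ∀ i, 0 < p.coeff (i + 1) → 0 < p.coeff i
  mul_le_sq : ∀ i, p.coeff i * p.coeff (i + 2) ≤ p.coeff (i + 1) ^ 2

namespace HasLogConcaveCoeffs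

variable {p : ℝ[X]}

theorem one : HasLogConcaveCoeffs 1 where
  nonneg i := by rw [coeff_one]; split_ifs <;> norm_num
  pos_of_succ_pos i := by simp [coeff_one]
  mul_le_sq i := by simp [coeff_one]

theorem mul_le_mul_succ (hp : HasLogConcaveCoeffs p) (i : ℕ) :
    p.coeff i * p.coeff (i + 3) ≤ p.coeff (i + 1) * p.coeff (i + 2) := by
  rcases (hp.nonneg (i + 3)).eq_or_lt with h3 | h3
  · rw [← h3, mul_zero]
    exact mul_nonneg (hp.nonneg _) (hp.nonneg _)
  have h2 := hp.pos_of_succ_pos _ h3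
  have h1 := hp.pos_of_succ_pos _ h2
  -- multiply the log-concavity inequalities at `i` and `i + 1`, then cancel `a_{i+1} a_{i+2} > 0`
  have := mul_le_mul (hp.mul_le_sq i) (hp.mul_le_sq (i + 1))
    (mul_nonneg (hp.nonneg _) (hp.nonneg _)) (sq_nonneg _)
  nlinarith [mul_pos h1 h2]

theorem one_add_C_mul_X_mul (hp : HasLogConcaveCoeffs p) {r : ℝ} (hr : 0 ≤ r) :
    HasLogConcaveCoeffs ((1 + C r * X) * p) := by
  have coeff_zero : ((1 + C r * X) * p).coeff 0 = p.coeff 0 := by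
    simp [add_mul, mul_assoc]
  have coeff_succ (i : ℕ) :
      ((1 + C r * X) * p).coeff (i + 1) = p.coeff (i + 1) + r * p.coeff i := by
    simp [add_mul, mul_assoc, coeff_X_mul]
  have hn := hp.nonneg
  refine ⟨fun i => ?_, fun i hi => ?_, fun i => ?_⟩
  · cases i with
    | zero => rw [coeff_zero]; exact hn 0
    | succ i => rw [coeff_succ]; exact add_nonneg (hn _) (mul_nonneg hr (hn _))
  · rw [coeff_succ] at hi
    have hpos : 0 < p.coeff i := by
      rcases (hn (i + 1)).eq_or_lt with h | h
      · rw [← h, zero_add] at hi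
        exact pos_of_mul_pos_right hi hr
      · exact hp.pos_of_succ_pos i h
    cases i with
    | zero => rwa [coeff_zero]
    | succ i => rw [coeff_succ]; exact add_pos_of_pos_of_nonneg hpos (mul_nonneg hr (hn _))
  · cases i with
    | zero =>
      rw [coeff_zero, coeff_succ, coeff_succ]
      nlinarith [hp.mul_le_sq 0, mul_nonneg hr (mul_nonneg (hn 0) (hn 1)),
        mul_nonneg (mul_nonneg hr hr) (mul_nonneg (hn 0) (hn 0))]
    | succ i =>
      rw [coeff_succ, coeff_succ, coeff_succ]
      nlinarith [hp.mul_le_sq i, hp.mul_le_sq (i + 1),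
        mul_nonneg hr (mul_nonneg (hn i) (hn (i + 1))),
        mul_le_mul_of_nonneg_left (hp.mul_le_mul_succ i) hr,
        mul_le_mul_of_nonneg_left (hp.mul_le_sq i) (mul_nonneg hr hr)]

theorem exists_monotoneOn_antitoneOn (hp : HasLogConcaveCoeffs p) :
    ∃ k, MonotoneOn p.coeff (Set.Iic k) ∧ AntitoneOn p.coeff (Set.Ici k) := by
  have hex : ∃ i, p.coeff (i + 1) ≤ p.coeff i :=
    ⟨p.natDegree, by rw [p.coeff_natDegree_succ_eq_zero]; exact hp.nonneg _⟩
  refine ⟨Nat.find hex, ?_, antitoneOn_nat_Ici_of_succ_le fun i hi => ?_⟩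
  · intro i _ j hj hij
    induction j, hij using Nat.le_induction with
    | base => rfl
    | succ j _ ih => exact (ih (Nat.le_of_succ_le hj)).trans (not_le.mp (Nat.find_min hex hj)).le
  · induction i, hi using Nat.le_induction with
    | base => exact Nat.find_spec hex
    | succ i _ ih =>
      rcases (hp.nonneg (i + 1)).eq_or_lt with h | h
      · rw [← h]
        exact not_lt.mp fun h2 => (hp.pos_of_succ_pos _ h2).ne h
      · nlinarith [hp.mul_le_sq i]

end HasLogConcaveCoeffs

theorem polyLogConcave_of_hasLogConcaveCoeffs_map {p : ℤ[X]}
    (h : HasLogConcaveCoeffs (p.map (algebraMap ℤ ℝ))) : PolyLogConcave p := by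
  intro i hi
  obtain ⟨i, rfl⟩ := Nat.exists_eq_add_of_le' hi
  have := h.mul_le_sq i
  simp only [coeff_map, eq_intCast] at this
  exact_mod_cast this

theorem polyUnimodal_of_hasLogConcaveCoeffs_map {p : ℤ[X]}
    (h : HasLogConcaveCoeffs (p.map (algebraMap ℤ ℝ))) : PolyUnimodal p := by
  obtain ⟨k, hmono, hanti⟩ := h.exists_monotoneOn_antitoneOn
  refine ⟨k, fun i j hij hjk => ?_, fun i j hki hij => ?_⟩
  · have := hmono (hij.trans hjk) hjk hij
    simp only [coeff_map, eq_intCast] at this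
    exact_mod_cast this
  · have := hanti hki (hki.trans hij) hij
    simp only [coeff_map, eq_intCast] at this
    exact_mod_cast this

noncomputable def nonnegLinearProducts : Submonoid ℝ[X] :=
  Submonoid.closure ((fun r => 1 + C r * X) '' Set.Ici 0)

theorem hasLogConcaveCoeffs_of_mem_nonnegLinearProducts {p : ℝ[X]}
    (hp : p ∈ nonnegLinearProducts) : HasLogConcaveCoeffs p := by
  induction hp using Submonoid.closure_induction_left with
  | one => exact .one
  | mul_left q hq p _ ih =>
    obtain ⟨r, hr, rfl⟩ := hq
    exact ih.one_add_C_mul_X_mul hr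

theorem im_eq_zero_of_mem_nonnegLinearProducts {p : ℝ[X]} (hp : p ∈ nonnegLinearProducts)
    {z : ℂ} (hz : aeval z p = 0) : z.im = 0 := by
  induction hp using Submonoid.closure_induction_left with
  | one => simp at hz
  | mul_left q hq p _ ih =>
    obtain ⟨r, -, rfl⟩ := hq
    rw [map_mul] at hz
    rcases mul_eq_zero.mp hz with hz | hz
    · have him := congrArg Complex.im hz
      have hre := congrArg Complex.re hz
      simp at him hre
      exact him.resolve_left (by rintro rfl; simp at hre)
    · exact ih hz

theorem one_add_C_mul_X_add_C_mul_X_sq_mem {n m : ℝ} (hn : 0 ≤ n) (hm : 0 ≤ m)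
    (h : 4 * m ≤ n ^ 2) : 1 + C n * X + C m * X ^ 2 ∈ nonnegLinearProducts := by
  set s := √(n ^ 2 - 4 * m)
  have hs : s ^ 2 = n ^ 2 - 4 * m := Real.sq_sqrt (by linarith)
  have hsn : s ≤ n := Real.sqrt_le_iff.mpr ⟨hn, by linarith⟩
  obtain ⟨r, t, hr, ht, rfl, rfl⟩ : ∃ r t : ℝ, 0 ≤ r ∧ 0 ≤ t ∧ r + t = n ∧ r * t = m :=
    ⟨(n + s) / 2, (n - s) / 2, by positivity, by linarith, by ring, by linear_combination -hs / 4⟩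
  have factor : 1 + C (r + t) * X + C (r * t) * X ^ 2 = (1 + C r * X) * (1 + C t * X) := by
    simp only [C_add, C_mul]
    ring
  rw [factor]
  exact mul_mem (Submonoid.subset_closure ⟨r, hr, rfl⟩) (Submonoid.subset_closure ⟨t, ht, rfl⟩)

section Graph

variable {V : Type*} [Fintype V] (G : SimpleGraph V)

theorem mem_stableSets {s : Finset V} : s ∈ stableSets G ↔ ∀ v ∈ s, ∀ w ∈ s, ¬ G.Adj v w := by
  simp [stableSets]

theorem coeff_indepPoly (k : ℕ) : (indepPoly G).coeff k = sCount G k := by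
  classical
  rw [indepPoly, finsetSum_coeff, sCount, Finset.card_filter]
  push_cast
  simp only [coeff_X_pow, eq_comm]

theorem sCount_zero : sCount G 0 = 1 := by
  rw [sCount, Finset.card_eq_one]
  refine ⟨∅, Finset.eq_singleton_iff_unique_mem.mpr ⟨?_, ?_⟩⟩
  · simp [mem_stableSets]
  · simp

theorem sCount_one : sCount G 1 = Fintype.card V := by
  classical
  rw [← Finset.card_univ, ← Finset.card_image_of_injective _ Finset.singleton_injective, sCount]
  congr 1
  ext s
  simp only [Finset.mem_filter, Finset.mem_image, Finset.mem_univ, true_and, Finset.card_eq_one]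
  constructor
  · exact fun ⟨_, v, hv⟩ => ⟨v, hv.symm⟩
  · rintro ⟨v, rfl⟩
    refine ⟨(mem_stableSets G).mpr ?_, v, rfl⟩
    simp

theorem sCount_eq_zero_of_indepNum_lt {k : ℕ} (h : indepNum G < k) : sCount G k = 0 := by
  rw [sCount, Finset.card_eq_zero, Finset.filter_eq_empty_iff]
  rintro s hs rfl
  exact (Finset.le_sup hs).not_gt h

theorem indepPoly_eq_of_indepNum_le_two (h : indepNum G ≤ 2) :
    indepPoly G = 1 + C (Fintype.card V : ℤ) * X + C (sCount G 2 : ℤ) * X ^ 2 := by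
  ext k
  rw [coeff_indepPoly]
  match k with
  | 0 => simp [sCount_zero]
  | 1 => simp [sCount_one, coeff_one]
  | 2 => simp [coeff_one]
  | k + 3 => simp [sCount_eq_zero_of_indepNum_lt G (by omega : indepNum G < k + 3), coeff_one]

theorem cliqueFree_compl_of_indepNum_lt {k : ℕ} (h : indepNum G < k) : Gᶜ.CliqueFree k := by
  intro s hs
  have : s ∈ stableSets G := by
    rw [mem_stableSets]
    intro v hv w hw hvw
    exact ((G.compl_adj v w).mp (hs.isClique hv hw (G.ne_of_adj hvw))).2 hvw
  exact (Finset.le_sup this).not_gt (hs.card_eq ▸ h)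

theorem sCount_two_eq_card_edgeFinset_compl [DecidableEq V] [DecidableRel G.Adj] :
    sCount G 2 = Gᶜ.edgeFinset.card := by
  refine (Finset.card_bij (fun e _ => e.toFinset) (fun e he => ?_) (fun e₁ _ e₂ _ h => ?_)
    (fun s hs => ?_)).symm
  · induction e using Sym2.ind with | h a b => ?_
    rw [SimpleGraph.mem_edgeFinset, SimpleGraph.mem_edgeSet, SimpleGraph.compl_adj] at he
    rw [Sym2.toFinset_mk_eq, Finset.mem_filter, mem_stableSets, Finset.card_pair he.1]
    refine ⟨?_, rfl⟩
    simp only [Finset.mem_insert, Finset.mem_singleton]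
    rintro v (rfl | rfl) w (rfl | rfl) hvw
    exacts [G.irrefl hvw, he.2 hvw, he.2 hvw.symm, G.irrefl hvw]
  · exact Sym2.ext fun x => by rw [← Sym2.mem_toFinset, h, Sym2.mem_toFinset]
  · rw [Finset.mem_filter, mem_stableSets, Finset.card_eq_two] at hs
    obtain ⟨hst, a, b, hab, rfl⟩ := hs
    refine ⟨s(a, b), ?_, Sym2.toFinset_mk_eq⟩
    rw [SimpleGraph.mem_edgeFinset, SimpleGraph.mem_edgeSet, SimpleGraph.compl_adj]
    exact ⟨hab, hst a (by simp) b (by simp)⟩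

theorem four_mul_sCount_two_le (h : indepNum G ≤ 2) : 4 * sCount G 2 ≤ Fintype.card V ^ 2 := by
  classical
  -- Turán's bound for triangle-free graphs (`r = 2`) is Mantel's `n² / 4`
  have := (cliqueFree_compl_of_indepNum_lt G (k := 2 + 1) (by omega)).card_edgeFinset_le
  rw [sCount_two_eq_card_edgeFinset_compl]
  have h2 : (Fintype.card V % 2).choose 2 = 0 := Nat.choose_eq_zero_of_lt (Nat.mod_lt _ two_pos)
  simp only [h2] at this
  omega

open Classical in
theorem card_eq_sum_card_subtype_supp (s : Finset V) :
    s.card = ∑ c : G.ConnectedComponent, (s.subtype (· ∈ c.supp)).card := by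
  rw [Finset.card_eq_sum_card_fiberwise (fun v _ => Finset.mem_univ (G.connectedComponentMk v))]
  simp only [Finset.card_subtype, SimpleGraph.ConnectedComponent.mem_supp_iff]

open Classical in
theorem indepPoly_eq_prod_connectedComponent :
    indepPoly G = ∏ c : G.ConnectedComponent, indepPoly (G.induce c.supp) := by
  let glue (g : ∀ c : G.ConnectedComponent, Finset c.supp) : Finset V :=
    Finset.univ.filter fun v => ∃ c, ∃ hv : v ∈ c.supp, ⟨v, hv⟩ ∈ g c
  have mem_glue {g c v} (hv : v ∈ c.supp) : v ∈ glue g ↔ ⟨v, hv⟩ ∈ g c := by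
    refine ⟨fun h => ?_, fun h => Finset.mem_filter.mpr ⟨Finset.mem_univ v, c, hv, h⟩⟩
    obtain ⟨-, c', hv', h⟩ := Finset.mem_filter.mp h
    obtain rfl : c' = c := hv'.symm.trans hv
    exact h
  simp only [indepPoly]
  rw [Finset.prod_univ_sum]
  refine Finset.sum_nbij' (fun s c => s.subtype (· ∈ c.supp)) glue
    (fun s hs => ?_) (fun g hg => ?_) (fun s _ => ?_) (fun g _ => ?_) (fun s _ => ?_)
  · simp only [Fintype.mem_piFinset, mem_stableSets, Finset.mem_subtype] at hs ⊢
    exact fun c v hv w hw => hs v hv w hw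
  · simp only [Fintype.mem_piFinset, mem_stableSets] at hg ⊢
    intro v hv w hw hvw
    have hv' : v ∈ (G.connectedComponentMk v).supp := rfl
    have hw' : w ∈ (G.connectedComponentMk v).supp :=
      ((G.connectedComponentMk v).mem_supp_congr_adj hvw).mp hv'
    exact hg _ ⟨v, hv'⟩ ((mem_glue hv').mp hv) ⟨w, hw'⟩ ((mem_glue hw').mp hw) hvw
  · ext v
    rw [mem_glue (c := G.connectedComponentMk v) rfl, Finset.mem_subtype]
  · funext c
    ext ⟨v, hv⟩
    rw [Finset.mem_subtype, mem_glue hv]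
  · rw [Finset.prod_pow_eq_pow_sum, card_eq_sum_card_subtype_supp]

theorem map_indepPoly_mem_nonnegLinearProducts (h : indepNum G ≤ 2) :
    (indepPoly G).map (algebraMap ℤ ℝ) ∈ nonnegLinearProducts := by
  rw [indepPoly_eq_of_indepNum_le_two G h]
  simpa using one_add_C_mul_X_add_C_mul_X_sq_mem (Nat.cast_nonneg _) (Nat.cast_nonneg _)
    (by exact_mod_cast four_mul_sCount_two_le G h)

end Graph

open Classical in
/-- If every connected component of `G` has independence number `2`, then the
independence polynomial of `G` has only real roots, and hence is log-concave and
unimodal. -/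
theorem realRooted_of_components_alpha_two {V : Type*} [Fintype V] (G : SimpleGraph V)
    (hcomp : ∀ c : G.ConnectedComponent, indepNum (G.induce c.supp) = 2) :
    (∀ z : ℂ, Polynomial.aeval z (indepPoly G) = 0 → z.im = 0) ∧
      PolyLogConcave (indepPoly G) ∧ PolyUnimodal (indepPoly G) := by
  have hmem : (indepPoly G).map (algebraMap ℤ ℝ) ∈ nonnegLinearProducts := by
    rw [indepPoly_eq_prod_connectedComponent, Polynomial.map_prod]
    exact prod_mem fun c _ => map_indepPoly_mem_nonnegLinearProducts _ (hcomp c).le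
  have hlc := hasLogConcaveCoeffs_of_mem_nonnegLinearProducts hmem
  refine ⟨fun z hz => im_eq_zero_of_mem_nonnegLinearProducts hmem ?_,
    polyLogConcave_of_hasLogConcaveCoeffs_map hlc, polyUnimodal_of_hasLogConcaveCoeffs_map hlc⟩
  rwa [aeval_map_algebraMap]
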